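/- arXiv:1707.07766 — 3 statements merged into one kernel-verified Lean document; each statement's English description precedes it below -/
import Mathlib

section
/- Let Φ : ℝ^n → ℝ^{m+1} be continuous, let Γ = {x ∈ ℝ^n : Φ(x) ∈ Q}, and let x̄ ∈ Γ with Φ(x̄) ∈ bd(Q)\{0}. Define ψ : ℝ^{m+1} → ℝ² by ψ(s₀,s_r) = (‖s_r‖² − s₀², −s₀). If there exist κ > 0 and a neighborhood U of x̄ such that dist(x;Γ) ≤ κ·dist(Φ(x);Q) for all x ∈ U, then there exist κ' > 0 and a neighborhood V of x̄ such that dist(x;Γ) ≤ κ'·dist(ψ(Φ(x)); ℝ²₋) for all x ∈ V, where ℝ²₋ = (−∞,0]². That is, metric subregularity of x ↦ Φ(x) − Q at (x̄,0) implies metric subregularity of x ↦ ψ(Φ(x)) − ℝ²₋ at (x̄,0). -/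
open scoped RealInnerProductSpace Pointwise
open Filter Topology Metric Set Classical

noncomputable section

abbrev Em (m : ℕ) := WithLp 2 (ℝ × EuclideanSpace ℝ (Fin m))

namespace SOC

def mk2 {α β : Type*} (a : α) (b : β) : WithLp 2 (α × β) := (WithLp.equiv 2 (α × β)).symm (a, b)

def Q (m : ℕ) : Set (Em m) := {s | ‖s.ofLp.2‖ ≤ s.ofLp.1}

variable {H : Type*} [NormedAddCommGroup H] [InnerProductSpace ℝ H]

def normalCone (C : Set H) (x : H) : Set H :=
  {y | x ∈ C ∧ ∀ z ∈ C, ⟪y, z - x⟫ ≤ 0}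

def tangentCone (Ω : Set H) (z : H) : Set H :=
  {w | ∃ t : ℕ → ℝ, ∃ wk : ℕ → H, (∀ k, 0 < t k) ∧ Tendsto t atTop (𝓝 0) ∧
    Tendsto wk atTop (𝓝 w) ∧ ∀ k, z + t k • wk k ∈ Ω}

def regularNormalCone (Ω : Set H) (z : H) : Set H :=
  {v | z ∈ Ω ∧ ∀ ε > 0, ∀ᶠ w in 𝓝[Ω \ {z}] z, ⟪v, w - z⟫ ≤ ε * ‖w - z‖}

def limitingNormalCone (Ω : Set H) (z : H) : Set H :=
  {v | ∃ zk : ℕ → H, ∃ vk : ℕ → H, (∀ k, vk k ∈ regularNormalCone Ω (zk k)) ∧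
    Tendsto zk atTop (𝓝 z) ∧ Tendsto vk atTop (𝓝 v)}

variable {n m : ℕ}

/-- The constraint set `Γ = {x | Φ(x) ∈ Q}`. -/
def Gamma (Φ : EuclideanSpace ℝ (Fin n) → Em m) : Set (EuclideanSpace ℝ (Fin n)) :=
  {x | Φ x ∈ Q m}

/-- Metric subregularity constraint qualification with modulus `κ`. -/
def MSCQmod (Φ : EuclideanSpace ℝ (Fin n) → Em m) (xb : EuclideanSpace ℝ (Fin n)) (κ : ℝ) : Prop :=
  ∃ U ∈ 𝓝 xb, ∀ x ∈ U, infDist x (Gamma Φ) ≤ κ * infDist (Φ x) (Q m)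

def MSCQ (Φ : EuclideanSpace ℝ (Fin n) → Em m) (xb : EuclideanSpace ℝ (Fin n)) : Prop :=
  ∃ κ > 0, MSCQmod Φ xb κ

/-- Lagrange multiplier set `Λ(x,x*)`. -/
def Lambda (Φ : EuclideanSpace ℝ (Fin n) → Em m) (x xs : EuclideanSpace ℝ (Fin n)) : Set (Em m) :=
  {lam | lam ∈ normalCone (Q m) (Φ x) ∧ ContinuousLinearMap.adjoint (fderiv ℝ Φ x) lam = xs}

/-- Critical cone `K(x,x*) = T_Γ(x) ∩ {x*}^⊥`. -/
def Kcone (Φ : EuclideanSpace ℝ (Fin n) → Em m) (x xs : EuclideanSpace ℝ (Fin n)) :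
    Set (EuclideanSpace ℝ (Fin n)) :=
  tangentCone (Gamma Φ) x ∩ {v | ⟪xs, v⟫ = 0}

/-- `x ↦ Φ̂(x) = (−Φ₀(x), Φ_r(x))`. -/
def hatFun (Φ : EuclideanSpace ℝ (Fin n) → Em m) (x : EuclideanSpace ℝ (Fin n)) : Em m :=
  mk2 (-(Φ x).ofLp.1) (Φ x).ofLp.2

/-- Hessian of `x ↦ ⟨λ, Φ(x)⟩` at `x`, as a linear map (derivative of the gradient). -/
def hessLam (Φ : EuclideanSpace ℝ (Fin n) → Em m) (x : EuclideanSpace ℝ (Fin n)) (lam : Em m) :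
    EuclideanSpace ℝ (Fin n) →L[ℝ] EuclideanSpace ℝ (Fin n) :=
  fderiv ℝ (fun y => ContinuousLinearMap.adjoint (fderiv ℝ Φ y) lam) x

/-- The curvature term `H(x;λ)`. -/

def Hmap (Φ : EuclideanSpace ℝ (Fin n) → Em m) (x : EuclideanSpace ℝ (Fin n)) (lam : Em m) :
    EuclideanSpace ℝ (Fin n) →L[ℝ] EuclideanSpace ℝ (Fin n) :=
  if Φ x ∈ frontier (Q m) \ {0} then
    (-(lam.ofLp.1 / (Φ x).ofLp.1)) •
      ((ContinuousLinearMap.adjoint (fderiv ℝ (hatFun Φ) x)).comp (fderiv ℝ Φ x))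
  else 0

/-- `∇²⟨λ,Φ⟩(x) + H(x;λ)`. -/
def Gmap (Φ : EuclideanSpace ℝ (Fin n) → Em m) (x : EuclideanSpace ℝ (Fin n)) (lam : Em m) :
    EuclideanSpace ℝ (Fin n) →L[ℝ] EuclideanSpace ℝ (Fin n) :=
  hessLam Φ x lam + Hmap Φ x lam

/-- `Λ(x,x*;v)`: minimizers of `λ ↦ −⟨v, (∇²⟨λ,Φ⟩(x)+H(x;λ))v⟩` over `Λ(x,x*)`. -/
def LambdaV (Φ : EuclideanSpace ℝ (Fin n) → Em m) (x xs v : EuclideanSpace ℝ (Fin n)) :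
    Set (Em m) :=
  {lam ∈ Lambda Φ x xs | ∀ mu ∈ Lambda Φ x xs,
    -⟪v, Gmap Φ x lam v⟫ ≤ -⟪v, Gmap Φ x mu v⟫}

/-- Graph of the limiting normal cone mapping `N_Γ`, inside `ℝ^n × ℝ^n` with the ℓ² norm. -/
def gphNGamma (Φ : EuclideanSpace ℝ (Fin n) → Em m) :
    Set (WithLp 2 (EuclideanSpace ℝ (Fin n) × EuclideanSpace ℝ (Fin n))) :=
  {p | p.ofLp.2 ∈ limitingNormalCone (Gamma Φ) p.ofLp.1}

/-- Second derivative `D²Φ(x)[v,v]`. -/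
def D2 (Φ : EuclideanSpace ℝ (Fin n) → Em m) (x v : EuclideanSpace ℝ (Fin n)) : Em m :=
  fderiv ℝ (fderiv ℝ Φ) x v v

end SOC

namespace SOC

/-- The reduction mapping `ψ(s₀,s_r) = (‖s_r‖² − s₀², −s₀)`, with values in `ℝ²`
equipped with the Euclidean norm. -/
def psi {m : ℕ} (s : Em m) : WithLp 2 (ℝ × ℝ) :=
  mk2 (‖s.ofLp.2‖ ^ 2 - s.ofLp.1 ^ 2) (-s.ofLp.1)

/-- The nonpositive orthant `ℝ²₋ = (−∞,0]²`. -/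
def R2minus : Set (WithLp 2 (ℝ × ℝ)) := {p | p.ofLp.1 ≤ 0 ∧ p.ofLp.2 ≤ 0}

end SOC

/-! Near `x̄` the first coordinate `s₀` of `s = Φ(x)` stays above `t / 2`, where `t = Φ₀(x̄) > 0`.
For such `s` outside `Q`, the point `(‖s_r‖, s_r) ∈ Q` gives
`dist(s; Q) ≤ ‖s_r‖ - s₀ ≤ (‖s_r‖² - s₀²) / (‖s_r‖ + s₀) ≤ dist(ψ(s); ℝ²₋) / t`,
so the modulus `κ` of `Φ(x) − Q` yields the modulus `κ / t` of `ψ(Φ(x)) − ℝ²₋`. -/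

namespace SOC

variable {m : ℕ}

lemma fst_pos_of_mem_Q_of_ne_zero {s : Em m} (hs : s ∈ Q m) (hne : s ≠ 0) : 0 < s.ofLp.1 := by
  refine (norm_nonneg _).trans hs |>.lt_of_ne fun h => hne ?_
  have hsnd : s.ofLp.2 = 0 := norm_le_zero_iff.mp (h ▸ hs)
  exact WithLp.ofLp_injective 2 (Prod.ext h.symm hsnd)

lemma infDist_Q_le (s : Em m) : infDist s (Q m) ≤ |‖s.ofLp.2‖ - s.ofLp.1| := by
  have hmem : mk2 ‖s.ofLp.2‖ s.ofLp.2 ∈ Q m := le_refl (‖s.ofLp.2‖)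
  refine (infDist_le_dist_of_mem hmem).trans_eq ?_
  rw [WithLp.prod_dist_eq_of_L2]
  simp [mk2, Real.dist_eq, Real.sqrt_sq_eq_abs, abs_sub_comm]

lemma fst_le_infDist_R2minus (p : WithLp 2 (ℝ × ℝ)) : p.ofLp.1 ≤ infDist p R2minus := by
  refine (le_infDist (show R2minus.Nonempty from ⟨0, le_rfl, le_rfl⟩)).mpr fun y hy => ?_
  calc p.ofLp.1 ≤ p.ofLp.1 - y.ofLp.1 := by linarith [hy.1]
    _ ≤ dist p.ofLp.1 y.ofLp.1 := le_abs_self _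
    _ ≤ dist p y := WithLp.dist_fst_le p y

lemma two_mul_fst_mul_infDist_Q_le (s : Em m) (hs : 0 ≤ s.ofLp.1) :
    2 * s.ofLp.1 * infDist s (Q m) ≤ infDist (psi s) R2minus := by
  by_cases hQ : s ∈ Q m
  · rw [infDist_zero_of_mem hQ, mul_zero]
    exact infDist_nonneg
  have hlt : s.ofLp.1 < ‖s.ofLp.2‖ := not_le.mp hQ
  have hdist : infDist s (Q m) ≤ ‖s.ofLp.2‖ - s.ofLp.1 :=
    (infDist_Q_le s).trans_eq (abs_of_pos (sub_pos.mpr hlt))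
  calc 2 * s.ofLp.1 * infDist s (Q m)
      ≤ (‖s.ofLp.2‖ + s.ofLp.1) * (‖s.ofLp.2‖ - s.ofLp.1) :=
        mul_le_mul (by linarith) hdist infDist_nonneg (by linarith)
    _ = ‖s.ofLp.2‖ ^ 2 - s.ofLp.1 ^ 2 := by ring
    _ ≤ infDist (psi s) R2minus := fst_le_infDist_R2minus (psi s)

end SOC

open SOC in
theorem metric_subregularity_propagation_at_nonzero_boundary_general
    {n m : ℕ} (Φ : EuclideanSpace ℝ (Fin n) → Em m) (hΦ : Continuous Φ)
    (xb : EuclideanSpace ℝ (Fin n)) (hxb : xb ∈ Gamma Φ)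
    (hnz : Φ xb ≠ 0)
    (κ : ℝ) (hκ : 0 < κ) (U : Set (EuclideanSpace ℝ (Fin n))) (hU : U ∈ nhds xb)
    (hsub : ∀ x ∈ U, Metric.infDist x (Gamma Φ) ≤ κ * Metric.infDist (Φ x) (Q m)) :
    ∃ κ' > (0 : ℝ), ∃ V ∈ nhds xb, ∀ x ∈ V,
      Metric.infDist x (Gamma Φ) ≤ κ' * Metric.infDist (psi (Φ x)) R2minus := by
  set t := (Φ xb).ofLp.1
  have ht : 0 < t := fst_pos_of_mem_Q_of_ne_zero hxb hnz
  have hfst : Continuous fun x => (Φ x).ofLp.1 :=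
    (WithLp.prod_continuous_ofLp 2 _ _ |>.comp hΦ).fst
  have hnear : ∀ᶠ x in nhds xb, t / 2 < (Φ x).ofLp.1 :=
    hfst.continuousAt.eventually (lt_mem_nhds (half_lt_self ht))
  refine ⟨κ / t, div_pos hκ ht, _, inter_mem hU hnear, fun x ⟨hxU, (hx : t / 2 < (Φ x).ofLp.1)⟩ => ?_⟩
  have hQ : t * infDist (Φ x) (Q m) ≤ infDist (psi (Φ x)) R2minus :=
    (mul_le_mul_of_nonneg_right (by linarith) infDist_nonneg).trans
      (two_mul_fst_mul_infDist_Q_le (Φ x) (by linarith))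
  calc infDist x (Gamma Φ) ≤ κ * infDist (Φ x) (Q m) := hsub x hxU
    _ = κ / t * (t * infDist (Φ x) (Q m)) := by field_simp
    _ ≤ κ / t * infDist (psi (Φ x)) R2minus := by gcongr

open SOC in
/-- Lemma 4.3: metric subregularity of `x ↦ Φ(x) − Q` at a nonzero boundary point
propagates to `x ↦ ψ(Φ(x)) − ℝ²₋`. -/
theorem metric_subregularity_propagation_at_nonzero_boundary
    {n m : ℕ} (Φ : EuclideanSpace ℝ (Fin n) → Em m) (hΦ : Continuous Φ)
    (xb : EuclideanSpace ℝ (Fin n)) (hxb : xb ∈ Gamma Φ)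
    (hbd : Φ xb ∈ frontier (Q m)) (hnz : Φ xb ≠ 0)
    (κ : ℝ) (hκ : 0 < κ) (U : Set (EuclideanSpace ℝ (Fin n))) (hU : U ∈ nhds xb)
    (hsub : ∀ x ∈ U, Metric.infDist x (Gamma Φ) ≤ κ * Metric.infDist (Φ x) (Q m)) :
    ∃ κ' > (0 : ℝ), ∃ V ∈ nhds xb, ∀ x ∈ V,
      Metric.infDist x (Gamma Φ) ≤ κ' * Metric.infDist (psi (Φ x)) R2minus :=
  metric_subregularity_propagation_at_nonzero_boundary_general Φ hΦ xb hxb hnz κ hκ U hU hsub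
end
end

section
/- Let Φ : ℝ^n → ℝ^{m+1} be twice continuously differentiable, x̄ with Φ(x̄) = 0, and λ̄ ∈ −Q with ∇Φ(x̄)*λ̄ = x̄*. Then the dual qualification condition (DN_Q)(0,λ̄)(0) ∩ ker ∇Φ(x̄)* = {0} holds if and only if the strict Robinson constraint qualification holds: ∇Φ(x̄)(ℝ^n) − (Q ∩ {λ̄}^⊥) = ℝ^{m+1} (note T_Q(Φ(x̄)) = T_Q(0) = Q). -/
open scoped RealInnerProductSpace Pointwise
open Filter Topology Metric Set Classical

noncomputable section

namespace SOC

/-- Graph of the normal cone mapping `N_Q`. -/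
def gphNQ (m : ℕ) : Set (WithLp 2 (Em m × Em m)) :=
  {p | p.ofLp.2 ∈ normalCone (Q m) p.ofLp.1}

end SOC

/-! For `λ̄ ∈ −Q`, `DN_Q(0, λ̄)(0)` is the polar of the face `Q ∩ {λ̄}^⊥`. One inclusion comes from
testing the normal cone inequality against `q ∈ Q ∩ {λ̄}^⊥`; for the other, `{0} × (−Q) ⊆ gph N_Q`,
and the tangent cone of `−Q` at `λ̄` is the closure of the cone generated by `−Q − λ̄`, whose dual
is `−(Q ∩ {λ̄}^⊥)` because `Q` is self-dual. The dual qualification condition therefore says that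
the convex cone `∇Φ(x̄)ℝⁿ − (Q ∩ {λ̄}^⊥)` has trivial dual cone; by separation such a cone is
dense, and a dense convex set in finite dimension is the whole space. -/

section ConeDuality

variable {E F : Type*} [NormedAddCommGroup E] [InnerProductSpace ℝ E]
  [NormedAddCommGroup F] [InnerProductSpace ℝ F]

theorem ConvexCone.mem_closure_of_forall_inner_nonneg [CompleteSpace E] (K : ConvexCone ℝ E)
    (hK : (K : Set E).Nonempty) {w : E} (h : ∀ y, (∀ x ∈ K, 0 ≤ ⟪x, y⟫) → 0 ≤ ⟪w, y⟫) :
    w ∈ closure (K : Set E) := by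
  by_contra hw
  lift K.closure to ProperCone ℝ E using ⟨by simpa [K.coe_closure] using hK.closure,
    K.coe_closure ▸ isClosed_closure⟩ with C hC
  obtain ⟨y, hCy, hwy⟩ := C.hyperplane_separation' (x₀ := w) (by
    change w ∉ (C : ConvexCone ℝ E)
    rwa [hC, ← SetLike.mem_coe, K.coe_closure])
  refine hwy.not_ge (h y fun x hx => hCy x ?_)
  change x ∈ (C : ConvexCone ℝ E)
  rw [hC, ← SetLike.mem_coe, K.coe_closure]
  exact subset_closure hx

theorem ConvexCone.coe_eq_univ_of_forall_inner_nonneg [FiniteDimensional ℝ E]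
    (K : ConvexCone ℝ E) (hK : (K : Set E).Nonempty)
    (h : ∀ y, (∀ x ∈ K, 0 ≤ ⟪x, y⟫) → y = 0) : (K : Set E) = univ := by
  have hdense : closure (K : Set E) = univ := eq_univ_of_forall fun w =>
    K.mem_closure_of_forall_inner_nonneg hK fun y hy => by rw [h y hy, inner_zero_right]
  have hspan : affineSpan ℝ (K : Set E) = ⊤ := by
    refine eq_top_iff.mpr fun x _ => ?_
    have := closure_minimal (subset_affineSpan ℝ (K : Set E))
      (affineSpan ℝ (K : Set E)).closed_of_finiteDimensional
    exact this (hdense ▸ mem_univ x)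
  have hint := K.convex.interior_nonempty_iff_affineSpan_eq_top.mpr hspan
  rw [← interior_eq_univ, ← K.convex.interior_closure_eq_interior_of_nonempty_interior hint,
    hdense, interior_univ]

theorem polar_inter_ker_adjoint_eq_zero_iff_range_sub_eq_univ [CompleteSpace E]
    [FiniteDimensional ℝ F] (A : E →L[ℝ] F) (K : ConvexCone ℝ F) (hK : K.Pointed) :
    {y | ∀ q ∈ K, ⟪q, y⟫ ≤ 0} ∩ {y | A.adjoint y = 0} = {0} ↔
      {z | ∃ u, ∃ q ∈ K, z = A u - q} = univ := by
  constructor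
  · intro h
    let D : ConvexCone ℝ F :=
      { carrier := {z | ∃ u, ∃ q ∈ K, z = A u - q}
        smul_mem' := by
          rintro c hc _ ⟨u, q, hq, rfl⟩
          exact ⟨c • u, c • q, K.smul_mem hc hq, by rw [map_smul, smul_sub]⟩
        add_mem' := by
          rintro _ ⟨u₁, q₁, hq₁, rfl⟩ _ ⟨u₂, q₂, hq₂, rfl⟩
          exact ⟨u₁ + u₂, q₁ + q₂, K.add_mem hq₁ hq₂, by rw [map_add]; abel⟩ }
    refine D.coe_eq_univ_of_forall_inner_nonneg ⟨0, 0, 0, hK, by simp⟩ fun y hy => ?_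
    have hpolar : ∀ q ∈ K, ⟪q, y⟫ ≤ 0 := fun q hq => by
      simpa using hy (-q) ⟨0, q, hq, by simp⟩
    have hrange : ∀ u, 0 ≤ ⟪A u, y⟫ := fun u => hy (A u) ⟨u, 0, hK, by simp⟩
    have hker : A.adjoint y = 0 := by
      rw [← real_inner_self_nonpos, ContinuousLinearMap.adjoint_inner_left, real_inner_comm]
      simpa using hrange (-A.adjoint y)
    exact h.subset ⟨hpolar, hker⟩
  · intro h
    refine Set.eq_singleton_iff_unique_mem.mpr ⟨⟨fun q _ => by simp, by simp⟩, ?_⟩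
    rintro y ⟨hpolar, hker⟩
    obtain ⟨u, q, hq, hyq⟩ := h.symm.subset (mem_univ (-y))
    have : ⟪y, -y⟫ = -⟪q, y⟫ := by
      rw [hyq, inner_sub_right, ← ContinuousLinearMap.adjoint_inner_left, hker, inner_zero_left,
        real_inner_comm, zero_sub]
    rw [← real_inner_self_nonpos]
    linarith [inner_neg_right (𝕜 := ℝ) y y, hpolar q hq]

end ConeDuality

namespace SOC

section Cones

variable {E F : Type*} [NormedAddCommGroup E] [InnerProductSpace ℝ E]
  [NormedAddCommGroup F] [InnerProductSpace ℝ F]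

theorem map_mem_tangentCone (L : E →L[ℝ] F) {s : Set E} {Ω : Set F} (hs : MapsTo L s Ω)
    {z w : E} (hw : w ∈ tangentCone s z) : L w ∈ tangentCone Ω (L z) := by
  obtain ⟨t, wk, ht, ht0, hwk, hmem⟩ := hw
  exact ⟨t, fun k => L (wk k), ht, ht0, (L.continuous.tendsto w).comp hwk,
    fun k => by simpa using hs (hmem k)⟩

theorem mem_tangentCone_of_mem_closure_hull {C : Set E} (hC : Convex ℝ C) {z w : E}
    (hz : z ∈ C) (hw : w ∈ closure (ConvexCone.hull ℝ (-z +ᵥ C) : Set E)) :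
    w ∈ tangentCone C z := by
  obtain ⟨b, hb, hbw⟩ := mem_closure_iff_seq_limit.mp hw
  choose c hc y hy hcy using fun k => (ConvexCone.mem_hull_of_convex (hC.vadd (-z))).mp (hb k)
  choose x hx hxy using hy
  dsimp only at hcy hxy
  -- `t k → 0` while `t k * c k ∈ [0, 1]`, so `z + t k • b k` is a convex combination
  let t : ℕ → ℝ := fun k => ((k : ℝ) + 1)⁻¹ * (1 + c k)⁻¹
  have ht : ∀ k, 0 < t k := fun k => by have := hc k; positivity
  have htc : ∀ k, t k * c k ∈ Icc (0 : ℝ) 1 := fun k => by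
    refine ⟨(mul_pos (ht k) (hc k)).le, ?_⟩
    calc t k * c k = ((k : ℝ) + 1)⁻¹ * (c k / (1 + c k)) := by ring
      _ ≤ 1 := mul_le_one₀ (inv_le_one_of_one_le₀ (by linarith [k.cast_nonneg (α := ℝ)]))
        (by have := hc k; positivity) ((div_le_one (by linarith [hc k])).mpr (by linarith))
  refine ⟨t, b, ht, ?_, hbw, fun k => ?_⟩
  · refine squeeze_zero (fun k => (ht k).le) (fun k => ?_) tendsto_one_div_add_atTop_nhds_zero_nat
    rw [one_div]
    exact mul_le_of_le_one_right (by positivity) (inv_le_one_of_one_le₀ (by linarith [hc k]))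
  · rw [← hcy k, ← hxy k, vadd_eq_add, smul_smul, neg_add_eq_sub]
    exact hC.add_smul_sub_mem hz (hx k) (htc k)

theorem inner_nonpos_of_mem_normalCone (K : ConvexCone ℝ E) {x y q : E}
    (hy : y ∈ normalCone (K : Set E) x) (hq : q ∈ K) : ⟪y, q⟫ ≤ 0 := by
  simpa using hy.2 (q + x) (K.add_mem hq hy.1)

end Cones

variable {m : ℕ}

theorem inner_def (x y : Em m) : ⟪x, y⟫ = x.ofLp.1 * y.ofLp.1 + ⟪x.ofLp.2, y.ofLp.2⟫ := by
  rw [WithLp.prod_inner_apply, RCLike.inner_apply', conj_trivial]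

def cone (m : ℕ) : ConvexCone ℝ (Em m) where
  carrier := Q m
  smul_mem' c hc x hx := by
    change ‖c • x.ofLp.2‖ ≤ c * x.ofLp.1
    rw [norm_smul, Real.norm_of_nonneg hc.le]
    exact mul_le_mul_of_nonneg_left hx hc.le
  add_mem' x hx y hy := (norm_add_le _ _).trans (add_le_add hx hy)

theorem zero_mem_Q : (0 : Em m) ∈ Q m := by
  change ‖(0 : EuclideanSpace ℝ (Fin m))‖ ≤ 0
  rw [norm_zero]

theorem inner_nonneg_of_mem_Q {x y : Em m} (hx : x ∈ Q m) (hy : y ∈ Q m) : 0 ≤ ⟪x, y⟫ := by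
  have hxy : -(‖x.ofLp.2‖ * ‖y.ofLp.2‖) ≤ ⟪x.ofLp.2, y.ofLp.2⟫ := neg_le_of_abs_le
    (abs_real_inner_le_norm _ _)
  rw [inner_def]
  nlinarith [norm_nonneg x.ofLp.2, norm_nonneg y.ofLp.2, show ‖x.ofLp.2‖ ≤ x.ofLp.1 from hx,
    show ‖y.ofLp.2‖ ≤ y.ofLp.1 from hy]

theorem mem_Q_of_forall_inner_nonneg {y : Em m} (h : ∀ q ∈ Q m, 0 ≤ ⟪q, y⟫) : y ∈ Q m := by
  have hunit : 0 ≤ y.ofLp.1 := by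
    have := h (mk2 1 0) (by simp [Q, mk2])
    simpa [inner_def, mk2] using this
  have hopp : ‖y.ofLp.2‖ ^ 2 ≤ y.ofLp.1 * ‖y.ofLp.2‖ := by
    have := h (mk2 ‖y.ofLp.2‖ (-y.ofLp.2)) (by simp [Q, mk2])
    simpa [inner_def, mk2, real_inner_self_eq_norm_sq] using this
  change ‖y.ofLp.2‖ ≤ y.ofLp.1
  nlinarith [norm_nonneg y.ofLp.2]

theorem mapsTo_neg_Q_gphNQ : MapsTo (mk2 (0 : Em m)) (-Q m) (gphNQ m) := fun y hy =>
  ⟨zero_mem_Q, fun z hz => by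
    change ⟪y, z - 0⟫ ≤ 0
    rw [sub_zero, ← neg_nonneg, ← inner_neg_left]
    exact inner_nonneg_of_mem_Q (Set.mem_neg.mp hy) hz⟩

theorem inner_nonpos_of_mem_tangentCone_gphNQ {lamb v q : Em m}
    (hv : mk2 (0 : Em m) v ∈ tangentCone (gphNQ m) (mk2 (0 : Em m) lamb)) (hq : q ∈ Q m)
    (hql : ⟪q, lamb⟫ = 0) : ⟪q, v⟫ ≤ 0 := by
  obtain ⟨t, wk, ht, -, hwk, hmem⟩ := hv
  have hk : ∀ k, ⟪q, (wk k).ofLp.2⟫ ≤ 0 := fun k => by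
    have := inner_nonpos_of_mem_normalCone (cone m) (hmem k) hq
    change ⟪lamb + t k • (wk k).ofLp.2, q⟫ ≤ 0 at this
    rw [inner_add_left, real_inner_comm, hql, zero_add, real_inner_smul_left,
      real_inner_comm] at this
    exact nonpos_of_mul_nonpos_right this (ht k)
  have hcont : Continuous fun p : WithLp 2 (Em m × Em m) => ⟪q, p.ofLp.2⟫ := by fun_prop
  have hlim : Tendsto (fun k => ⟪q, (wk k).ofLp.2⟫) atTop (𝓝 ⟪q, v⟫) :=
    (hcont.tendsto _).comp hwk
  exact le_of_tendsto' hlim hk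

theorem mem_closure_hull_of_forall_inner_nonpos {lamb v : Em m} (hlam : lamb ∈ -Q m)
    (hv : ∀ q ∈ Q m, ⟪q, lamb⟫ = 0 → ⟪q, v⟫ ≤ 0) :
    v ∈ closure (ConvexCone.hull ℝ (-lamb +ᵥ -Q m) : Set (Em m)) := by
  have hzero : (0 : Em m) = -lamb +ᵥ lamb := (neg_add_cancel lamb).symm
  refine (ConvexCone.hull ℝ _).mem_closure_of_forall_inner_nonneg
    ⟨0, hzero ▸ ConvexCone.subset_hull (Set.vadd_mem_vadd_set hlam)⟩ fun y hy => ?_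
  have hshift : ∀ q ∈ Q m, ⟪lamb, y⟫ + ⟪q, y⟫ ≤ 0 := fun q hq => by
    have := hy (-lamb + -q)
      (ConvexCone.subset_hull (Set.vadd_mem_vadd_set (Set.neg_mem_neg.mpr hq)))
    rw [inner_add_left, inner_neg_left, inner_neg_left] at this
    linarith
  -- `Q` is a cone, so the shift `⟪lamb, y⟫` cannot compensate a positive `⟪q, y⟫`
  have hQy : ∀ q ∈ Q m, ⟪q, y⟫ ≤ 0 := fun q hq => by
    by_contra! hpos
    have := hshift (((|⟪lamb, y⟫| + 1) / ⟪q, y⟫) • q) ((cone m).smul_mem (by positivity) hq)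
    rw [real_inner_smul_left, div_mul_cancel₀ _ hpos.ne'] at this
    linarith [neg_abs_le ⟪lamb, y⟫]
  have hnegy : -y ∈ Q m := mem_Q_of_forall_inner_nonneg fun q hq => by
    rw [inner_neg_right]; linarith [hQy q hq]
  have horth : ⟪-y, lamb⟫ = 0 := by
    have h₁ := inner_nonneg_of_mem_Q hnegy (Set.mem_neg.mp hlam)
    have h₂ := hshift 0 zero_mem_Q
    rw [inner_neg_left, inner_neg_right, neg_neg] at h₁
    rw [inner_zero_left, add_zero, real_inner_comm] at h₂
    rw [inner_neg_left]; linarith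
  have := hv (-y) hnegy horth
  rw [inner_neg_left, real_inner_comm] at this
  linarith

theorem mem_tangentCone_gphNQ_iff {lamb v : Em m} (hlam : lamb ∈ -Q m) :
    mk2 (0 : Em m) v ∈ tangentCone (gphNQ m) (mk2 (0 : Em m) lamb) ↔
      ∀ q ∈ Q m, ⟪q, lamb⟫ = 0 → ⟪q, v⟫ ≤ 0 := by
  refine ⟨fun hv q hq hql => inner_nonpos_of_mem_tangentCone_gphNQ hv hq hql, fun hv => ?_⟩
  let L : Em m →L[ℝ] WithLp 2 (Em m × Em m) :=
    (WithLp.prodContinuousLinearEquiv 2 ℝ (Em m) (Em m)).symm.toContinuousLinearMap ∘L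
      ContinuousLinearMap.inr ℝ (Em m) (Em m)
  exact map_mem_tangentCone L mapsTo_neg_Q_gphNQ <| mem_tangentCone_of_mem_closure_hull
    (cone m).convex.neg hlam (mem_closure_hull_of_forall_inner_nonpos hlam hv)

def coneOrthogonal (lamb : Em m) : ConvexCone ℝ (Em m) :=
  cone m ⊓ (ℝ ∙ lamb)ᗮ.toConvexCone

theorem mem_coneOrthogonal {lamb q : Em m} : q ∈ coneOrthogonal lamb ↔ q ∈ Q m ∧ ⟪q, lamb⟫ = 0 :=
  and_congr Iff.rfl Submodule.mem_orthogonal_singleton_iff_inner_left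

theorem coneOrthogonal_pointed (lamb : Em m) : (coneOrthogonal lamb).Pointed :=
  mem_coneOrthogonal.mpr ⟨zero_mem_Q, inner_zero_left _⟩

end SOC

open SOC in
theorem dual_qualification_iff_strict_Robinson_CQ_general
    {n m : ℕ} (Φ : EuclideanSpace ℝ (Fin n) → Em m)
    (xb : EuclideanSpace ℝ (Fin n))
    (lamb : Em m) (hlam1 : lamb ∈ -(Q m)) :
    ({w : Em m | mk2 (0 : Em m) w ∈ tangentCone (gphNQ m) (mk2 (0 : Em m) lamb)} ∩
      {w : Em m | ContinuousLinearMap.adjoint (fderiv ℝ Φ xb) w = 0} = {0})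
    ↔
    ({z : Em m | ∃ u : EuclideanSpace ℝ (Fin n), ∃ q ∈ Q m,
        ⟪q, lamb⟫ = 0 ∧ z = (fderiv ℝ Φ xb) u - q} = Set.univ) := by
  have hDN : {w : Em m | mk2 (0 : Em m) w ∈ tangentCone (gphNQ m) (mk2 (0 : Em m) lamb)} =
      {y | ∀ q ∈ coneOrthogonal lamb, ⟪q, y⟫ ≤ 0} := by
    ext v
    exact (mem_tangentCone_gphNQ_iff hlam1).trans (by simp [mem_coneOrthogonal])
  have hRobinson : {z : Em m | ∃ u : EuclideanSpace ℝ (Fin n), ∃ q ∈ Q m,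
      ⟪q, lamb⟫ = 0 ∧ z = (fderiv ℝ Φ xb) u - q} =
      {z | ∃ u, ∃ q ∈ coneOrthogonal lamb, z = (fderiv ℝ Φ xb) u - q} := by
    simp only [mem_coneOrthogonal, and_assoc]
  rw [hDN, hRobinson]
  exact polar_inter_ker_adjoint_eq_zero_iff_range_sub_eq_univ _ _ (coneOrthogonal_pointed lamb)

open SOC in
/-- Theorem 4.6, (ii) ⟺ (iii): the dual qualification condition is equivalent to the
strict Robinson constraint qualification `∇Φ(x̄)ℝⁿ − (Q ∩ {λ̄}^⊥) = ℝ^{m+1}`. -/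
theorem dual_qualification_iff_strict_Robinson_CQ
    {n m : ℕ} (Φ : EuclideanSpace ℝ (Fin n) → Em m) (hΦ : ContDiff ℝ 2 Φ)
    (xb : EuclideanSpace ℝ (Fin n)) (hxb : Φ xb = 0)
    (xs : EuclideanSpace ℝ (Fin n))
    (lamb : Em m) (hlam1 : lamb ∈ -(Q m))
    (hlam2 : ContinuousLinearMap.adjoint (fderiv ℝ Φ xb) lamb = xs) :
    ({w : Em m | mk2 (0 : Em m) w ∈ tangentCone (gphNQ m) (mk2 (0 : Em m) lamb)} ∩
      {w : Em m | ContinuousLinearMap.adjoint (fderiv ℝ Φ xb) w = 0} = {0})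
    ↔
    ({z : Em m | ∃ u : EuclideanSpace ℝ (Fin n), ∃ q ∈ Q m,
        ⟪q, lamb⟫ = 0 ∧ z = (fderiv ℝ Φ xb) u - q} = Set.univ) :=
  dual_qualification_iff_strict_Robinson_CQ_general Φ xb lamb hlam1
end
end

section
/- Let φ₀ : ℝ^n → ℝ and Φ : ℝ^n → ℝ^{m+1} be twice continuously differentiable, Γ = {x : Φ(x) ∈ Q}, and let x̄ ∈ Γ with Φ(x̄) = 0. Suppose λ̄ ∈ −Q satisfies ∇Φ(x̄)*λ̄ = −∇φ₀(x̄), and assume the second-order sufficient condition: for every u ≠ 0 with ∇Φ(x̄)u ∈ Q and ⟨∇Φ(x̄)u, λ̄⟩ = 0 one has ⟨∇²φ₀(x̄)u,u⟩ + ⟨λ̄, D²Φ(x̄)[u,u]⟩ > 0. Then x̄ is a strict local minimizer of φ₀ on Γ: there is r > 0 such that φ₀(x) > φ₀(x̄) for every x ∈ Γ with 0 < ‖x − x̄‖ ≤ r. -/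
open scoped RealInnerProductSpace Pointwise
open Filter Topology Metric Set Classical

noncomputable section

/-! If `x̄` were not a strict local minimizer, points `x ∈ Γ \ {x̄}` with `φ₀ x ≤ φ₀ x̄` would
accumulate at `x̄` along some unit direction `u` (compactness of the sphere). First-order
expansion gives `∇Φ(x̄)u ∈ Q` and `∇φ₀(x̄)u ≤ 0`; together with `∇Φ(x̄)*λ̄ = -∇φ₀(x̄)` and
`⟨λ̄, Q⟩ ≤ 0` this makes `u` critical: `⟨∇Φ(x̄)u, λ̄⟩ = 0`. On those points the Lagrangian
`L = φ₀ + ⟨λ̄, Φ⟩` satisfies `L ≤ φ₀ ≤ φ₀(x̄) = L(x̄)`, and `∇L(x̄) = 0`, so the mean value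
theorem applied twice along the segments shows `∇²L(x̄)[u,u] ≤ 0`, contradicting the
second-order sufficient condition. -/

open scoped NNReal

section Calculus

variable {E : Type*} [NormedAddCommGroup E] [NormedSpace ℝ E]

theorem exists_ne_zero_mem_posTangentConeAt [ProperSpace E] {s : Set E} {x : E}
    (hx : AccPt x (𝓟 s)) : ∃ u ≠ 0, u ∈ posTangentConeAt s x := by
  obtain ⟨y, hys, hyx⟩ := mem_closure_iff_seq_limit.mp
    (mem_closure_iff_nhdsWithin_neBot.mpr (accPt_principal_iff_nhdsWithin.mp hx))
  set d : ℕ → E := fun n => y n - x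
  have hd_ne (n : ℕ) : d n ≠ 0 := sub_ne_zero.mpr (hys n).2
  have hd_sphere (n : ℕ) : ‖d n‖₊⁻¹ • d n ∈ sphere (0 : E) 1 := by
    simp [NNReal.smul_def, norm_smul, hd_ne n]
  obtain ⟨u, hu, φ, hφ, hlim⟩ := (isCompact_sphere (0 : E) 1).tendsto_subseq hd_sphere
  refine ⟨u, ne_zero_of_mem_unit_sphere ⟨u, hu⟩, mem_tangentConeAt_of_seq atTop
    (fun n => ‖d (φ n)‖₊⁻¹) (d ∘ φ) ?_ (.of_forall fun n => ?_) hlim⟩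
  · simpa [d, Function.comp_def] using (hyx.comp hφ.tendsto_atTop).sub_const x
  · simpa [d] using (hys (φ n)).1

theorem HasFDerivWithinAt.mem_of_mem_posTangentConeAt
    {F : Type*} [NormedAddCommGroup F] [NormedSpace ℝ F] {f : E → F} {f' : E →L[ℝ] F}
    {s : Set E} {x u : E} {K : Set F} (hK : IsClosed K)
    (hK_smul : ∀ c : ℝ≥0, ∀ y ∈ K, c • y ∈ K)
    (hf : HasFDerivWithinAt f f' s x) (hfs : ∀ y ∈ s, f y - f x ∈ K)
    (hu : u ∈ posTangentConeAt s x) : f' u ∈ K := by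
  obtain ⟨α, l, hl, c, d, hd₀, hds, hcd⟩ := exists_fun_of_mem_tangentConeAt hu
  simp only [NNReal.smul_def] at hcd
  refine hK.mem_of_tendsto (hf.lim hd₀ hds hcd) (hds.mono fun n hn => ?_)
  simpa only [NNReal.smul_def] using hK_smul (c n) _ (hfs _ hn)

theorem exists_mem_Ioo_fderiv_fderiv_nonpos {f : E → ℝ} (hf : Differentiable ℝ f)
    (hf' : Differentiable ℝ (fderiv ℝ f)) {a d : E} (ha : fderiv ℝ f a = 0)
    (hle : f (a + d) ≤ f a) :
    ∃ θ ∈ Ioo (0 : ℝ) 1, fderiv ℝ (fderiv ℝ f) (a + θ • d) d d ≤ 0 := by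
  have hline (s : ℝ) : HasDerivAt (fun s : ℝ => a + s • d) d s := by
    simpa using ((hasDerivAt_id s).smul_const d).const_add a
  have hg (s : ℝ) : HasDerivAt (fun s => f (a + s • d)) (fderiv ℝ f (a + s • d) d) s :=
    (hf _).hasFDerivAt.comp_hasDerivAt s (hline s)
  have hg' (s : ℝ) : HasDerivAt (fun s => fderiv ℝ f (a + s • d) d)
      (fderiv ℝ (fderiv ℝ f) (a + s • d) d d) s := by
    simpa using
      ((hf' _).hasFDerivAt.comp_hasDerivAt s (hline s)).clm_apply (hasDerivAt_const s d)
  obtain ⟨b, hb, hgb⟩ := exists_hasDerivAt_eq_slope _ _ zero_lt_one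
    (fun s _ => (hg s).continuousAt.continuousWithinAt) (fun s _ => hg s)
  obtain ⟨θ, hθ, hgθ⟩ := exists_hasDerivAt_eq_slope _ _ hb.1
    (fun s _ => (hg' s).continuousAt.continuousWithinAt) (fun s _ => hg' s)
  refine ⟨θ, ⟨hθ.1, hθ.2.trans hb.2⟩, ?_⟩
  rw [hgθ, hgb]
  simp only [zero_smul, add_zero, one_smul, ha, zero_apply, sub_zero, div_one]
  exact div_nonpos_of_nonpos_of_nonneg (sub_nonpos.mpr hle) hb.1.le

theorem IsLocalMaxOn.fderiv_fderiv_apply_nonpos {f : E → ℝ} {s : Set E} {a u : E}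
    (h : IsLocalMaxOn f s a) (hf : ContDiff ℝ 2 f) (ha : fderiv ℝ f a = 0)
    (hu : u ∈ posTangentConeAt s a) : fderiv ℝ (fderiv ℝ f) a u u ≤ 0 := by
  obtain ⟨α, l, hl, c, d, hd₀, hds, hcd⟩ := exists_fun_of_mem_tangentConeAt hu
  simp only [NNReal.smul_def] at hcd
  have hf' : ContDiff ℝ 1 (fderiv ℝ f) := hf.fderiv_right (by norm_num)
  have hle : ∀ᶠ n in l, f (a + d n) ≤ f a :=
    (tendsto_nhdsWithin_iff.2 ⟨by simpa using tendsto_const_nhds.add hd₀, hds⟩).eventually h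
  obtain ⟨θ, hθ⟩ := (hle.mono fun n hn => exists_mem_Ioo_fderiv_fderiv_nonpos
    (hf.differentiable (by norm_num)) (hf'.differentiable one_ne_zero) ha hn).choice
  have hξ : Tendsto (fun n => a + θ n • d n) l (𝓝 a) := by
    have : Tendsto (fun n => θ n • d n) l (𝓝 0) := by
      refine squeeze_zero_norm' (hθ.mono fun n hn => ?_) (tendsto_norm_zero.comp hd₀)
      rw [norm_smul, Real.norm_of_nonneg hn.1.1.le]
      exact mul_le_of_le_one_left (norm_nonneg _) hn.1.2.le
    simpa using tendsto_const_nhds.add this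
  have hB : Continuous fun p : (E →L[ℝ] E →L[ℝ] ℝ) × E => p.1 p.2 p.2 := by fun_prop
  refine le_of_tendsto ((hB.tendsto _).comp
    ((((hf'.continuous_fderiv one_ne_zero).tendsto a).comp hξ).prodMk_nhds hcd))
    (hθ.mono fun n hn => ?_)
  simpa [map_smul, ← mul_assoc] using
    mul_nonpos_of_nonneg_of_nonpos (mul_self_nonneg (c n : ℝ)) hn.2

end Calculus

section Lagrangian

variable {E F : Type*} [NormedAddCommGroup E] [NormedAddCommGroup F] [InnerProductSpace ℝ F]

def lagrangian (f : E → ℝ) (g : E → F) (μ : F) (x : E) : ℝ := f x + ⟪μ, g x⟫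

variable [NormedSpace ℝ E] {f : E → ℝ} {g : E → F}

theorem ContDiff.lagrangian {n : WithTop ℕ∞} (hf : ContDiff ℝ n f) (hg : ContDiff ℝ n g)
    (μ : F) : ContDiff ℝ n (lagrangian f g μ) :=
  hf.add ((innerSL ℝ μ).contDiff.comp hg)

theorem fderiv_fderiv_lagrangian_apply (hf : ContDiff ℝ 2 f) (hg : ContDiff ℝ 2 g) (μ : F)
    (x v w : E) : fderiv ℝ (fderiv ℝ (lagrangian f g μ)) x v w =
      fderiv ℝ (fderiv ℝ f) x v w + ⟪μ, fderiv ℝ (fderiv ℝ g) x v w⟫ := by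
  have h : lagrangian f g μ = f + innerSL ℝ μ ∘ g := rfl
  have := iteratedFDeriv_two_apply (𝕜 := ℝ) (lagrangian f g μ) x ![v, w]
  rw [h, iteratedFDeriv_add_apply hf.contDiffAt ((innerSL ℝ μ).contDiff.comp hg).contDiffAt,
    (innerSL ℝ μ).iteratedFDeriv_comp_left hg.contDiffAt le_rfl] at this
  simpa [iteratedFDeriv_two_apply, h] using this.symm

end Lagrangian

section Gradient

variable {E F : Type*} [NormedAddCommGroup E] [InnerProductSpace ℝ E] [CompleteSpace E]
  [NormedAddCommGroup F] [InnerProductSpace ℝ F] [CompleteSpace F]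
  {f : E → ℝ} {g : E → F} {x : E} {μ : F}

theorem inner_fderiv_apply_of_adjoint_eq_neg_gradient
    (h : ContinuousLinearMap.adjoint (fderiv ℝ g x) μ = -gradient f x) (w : E) :
    ⟪μ, fderiv ℝ g x w⟫ = -fderiv ℝ f x w := by
  rw [← ContinuousLinearMap.adjoint_inner_left, h, inner_neg_left, gradient,
    InnerProductSpace.toDual_symm_apply]

theorem fderiv_lagrangian_eq_zero (hf : DifferentiableAt ℝ f x) (hg : DifferentiableAt ℝ g x)
    (h : ContinuousLinearMap.adjoint (fderiv ℝ g x) μ = -gradient f x) :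
    fderiv ℝ (lagrangian f g μ) x = 0 := by
  have hL : HasFDerivAt (lagrangian f g μ)
      (fderiv ℝ f x + (innerSL ℝ μ).comp (fderiv ℝ g x)) x :=
    hf.hasFDerivAt.add ((innerSL ℝ μ).hasFDerivAt.comp x hg.hasFDerivAt)
  ext w
  simp [hL.fderiv, inner_fderiv_apply_of_adjoint_eq_neg_gradient h]

end Gradient

namespace SOC

variable {m : ℕ}

theorem isClosed_Q (m : ℕ) : IsClosed (Q m) :=
  isClosed_le (continuous_norm.comp (continuous_snd.comp (WithLp.prod_continuous_ofLp ..)))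
    (continuous_fst.comp (WithLp.prod_continuous_ofLp ..))

theorem smul_mem_Q (c : ℝ≥0) {s : Em m} (hs : s ∈ Q m) : c • s ∈ Q m := by
  simpa [Q, NNReal.smul_def, norm_smul] using mul_le_mul_of_nonneg_left hs c.coe_nonneg

theorem inner_nonneg_of_mem_Q_s13 {s t : Em m} (hs : s ∈ Q m) (ht : t ∈ Q m) : 0 ≤ ⟪s, t⟫ := by
  have h₂ := neg_le_of_abs_le (abs_real_inner_le_norm s.ofLp.2 t.ofLp.2)
  have h₁ := mul_le_mul hs ht (norm_nonneg _) ((norm_nonneg _).trans hs)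
  rw [WithLp.prod_inner_apply]
  simp only [RCLike.inner_apply, conj_trivial]
  linarith

theorem inner_nonpos_of_mem_neg_Q {μ s : Em m} (hμ : μ ∈ -(Q m)) (hs : s ∈ Q m) :
    ⟪μ, s⟫ ≤ 0 := by
  simpa only [inner_neg_left, neg_nonneg] using inner_nonneg_of_mem_Q_s13 hμ hs

end SOC

open SOC in
theorem second_order_sufficient_condition_strict_local_min_general
    {n m : ℕ} (φ₀ : EuclideanSpace ℝ (Fin n) → ℝ) (hφ : ContDiff ℝ 2 φ₀)
    (Φ : EuclideanSpace ℝ (Fin n) → Em m) (hΦ : ContDiff ℝ 2 Φ)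
    (xb : EuclideanSpace ℝ (Fin n)) (hxb0 : Φ xb = 0)
    (lamb : Em m) (hlam1 : lamb ∈ -(Q m))
    (hlam2 : ContinuousLinearMap.adjoint (fderiv ℝ Φ xb) lamb = -gradient φ₀ xb)
    (hsosc : ∀ u : EuclideanSpace ℝ (Fin n), u ≠ 0 →
      (fderiv ℝ Φ xb) u ∈ Q m → ⟪(fderiv ℝ Φ xb) u, lamb⟫ = 0 →
      0 < (fderiv ℝ (fderiv ℝ φ₀) xb) u u + ⟪lamb, D2 Φ xb u⟫) :
    ∃ r > (0 : ℝ), ∀ x ∈ Gamma Φ, 0 < ‖x - xb‖ → ‖x - xb‖ ≤ r → φ₀ xb < φ₀ x := by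
  by_contra! hcon
  set S := Gamma Φ ∩ {x | φ₀ x ≤ φ₀ xb}
  have hacc : AccPt xb (𝓟 S) := by
    refine accPt_iff_nhds.mpr fun U hU => ?_
    obtain ⟨r, hr, hball⟩ := Metric.mem_nhds_iff.mp hU
    obtain ⟨x, hxΓ, hpos, hle, hφx⟩ := hcon (r / 2) (half_pos hr)
    refine ⟨x, ⟨hball ?_, hxΓ, hφx⟩, fun h => by simp [h] at hpos⟩
    rw [mem_ball, dist_eq_norm]
    linarith
  obtain ⟨u, hu0, hu⟩ := exists_ne_zero_mem_posTangentConeAt hacc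
  have hφd : Differentiable ℝ φ₀ := hφ.differentiable (by norm_num)
  have hΦd : Differentiable ℝ Φ := hΦ.differentiable (by norm_num)
  have hAu : fderiv ℝ Φ xb u ∈ Q m :=
    (hΦd xb).hasFDerivAt.hasFDerivWithinAt.mem_of_mem_posTangentConeAt (isClosed_Q m)
      smul_mem_Q (fun x hx => by simpa [hxb0] using hx.1.out) hu
  have hφu : fderiv ℝ φ₀ xb u ≤ 0 :=
    (IsMaxOn.localize fun x hx => hx.2).hasFDerivWithinAt_nonpos
      (hφd xb).hasFDerivAt.hasFDerivWithinAt hu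
  have hcrit : ⟪fderiv ℝ Φ xb u, lamb⟫ = 0 := by
    rw [real_inner_comm]
    linarith [inner_nonpos_of_mem_neg_Q hlam1 hAu,
      inner_fderiv_apply_of_adjoint_eq_neg_gradient hlam2 u]
  have hLmax : IsLocalMaxOn (lagrangian φ₀ Φ lamb) S xb :=
    IsMaxOn.localize <| isMaxOn_iff.mpr fun x hx => by
      simp only [lagrangian, hxb0, inner_zero_right, add_zero]
      linarith [inner_nonpos_of_mem_neg_Q hlam1 hx.1.out, hx.2.out]
  have hL := hLmax.fderiv_fderiv_apply_nonpos (hφ.lagrangian hΦ lamb)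
    (fderiv_lagrangian_eq_zero (hφd xb) (hΦd xb) hlam2) hu
  rw [fderiv_fderiv_lagrangian_apply hφ hΦ] at hL
  exact (hsosc u hu0 hAu hcrit).not_ge hL

open SOC in
/-- Proposition 4.9: the second-order sufficient condition implies that `x̄` is a strict
local minimizer of `φ₀` over `Γ = {x : Φ(x) ∈ Q}` when `Φ(x̄) = 0`. -/
theorem second_order_sufficient_condition_strict_local_min
    {n m : ℕ} (φ₀ : EuclideanSpace ℝ (Fin n) → ℝ) (hφ : ContDiff ℝ 2 φ₀)
    (Φ : EuclideanSpace ℝ (Fin n) → Em m) (hΦ : ContDiff ℝ 2 Φ)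
    (xb : EuclideanSpace ℝ (Fin n)) (hxb : xb ∈ Gamma Φ) (hxb0 : Φ xb = 0)
    (lamb : Em m) (hlam1 : lamb ∈ -(Q m))
    (hlam2 : ContinuousLinearMap.adjoint (fderiv ℝ Φ xb) lamb = -gradient φ₀ xb)
    (hsosc : ∀ u : EuclideanSpace ℝ (Fin n), u ≠ 0 →
      (fderiv ℝ Φ xb) u ∈ Q m → ⟪(fderiv ℝ Φ xb) u, lamb⟫ = 0 →
      0 < (fderiv ℝ (fderiv ℝ φ₀) xb) u u + ⟪lamb, D2 Φ xb u⟫) :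
    ∃ r > (0 : ℝ), ∀ x ∈ Gamma Φ, 0 < ‖x - xb‖ → ‖x - xb‖ ≤ r → φ₀ xb < φ₀ x :=
  second_order_sufficient_condition_strict_local_min_general φ₀ hφ Φ hΦ xb hxb0 lamb hlam1 hlam2
    hsosc
end
end
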